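/- Let n, m ≥ 1 be natural numbers, let p, q be natural numbers, let Ω be a nonempty bounded open subset of ℝ^p and Ω' a nonempty bounded open subset of ℝ^q, and let E and F be nontrivial real Banach spaces. Let C^n(Ω̄,E) denote the space of functions f : Ω → E that arise as restrictions to Ω of functions g : ℝ^p → E satisfying ContDiffOn ℝ n g Ω and such that, for every k ≤ n, the iterated derivative iteratedFDerivWithin ℝ k g Ω, restricted to Ω, extends to a continuous function on the closure of Ω; define C^m(Ω̄',F) analogously. If there exists a biseparating map T : C^n(Ω̄,E) → C^m(Ω̄',F), then the closures of Ω in ℝ^p and of Ω' in ℝ^q are homeomorphic. -/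

import Mathlib

/-!
Every function in `C^n(Ω̄,E)` extends continuously to the compact set `Ω̄`, and the space is stable
under multiplication by smooth functions (Leibniz rule). Let `f₀ = T⁻¹(c)` for a nonzero constant
`c`, so that `T f₀` vanishes nowhere on `Ω̄'`. For `y ∈ Ω̄'` some `x ∈ Ω̄` lies in the support of
every `f` with `(T f)(y) ≠ 0`: otherwise a smooth partition of unity subordinate to the complements
of these supports splits `f₀` into finitely many pieces, each with support disjoint from that of
some such `f`, so by separation every `T`(piece) vanishes at `y`, and by additivity so does `T f₀`.
Cutting `f₀` with a bump function shows that `y ↦ x` is continuous, and applying the support maps of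
`T` and `T⁻¹` to bump functions concentrated near a point shows that they are mutually inverse.
-/

/-- The space `C^n(Ω̄,E)` of functions `f : Ω → E` that are restrictions to `Ω` of functions
`g : ℝ^p → E` which are `n`-times continuously differentiable on `Ω` and whose iterated
derivatives up to order `n`, restricted to `Ω`, extend continuously to the closure of `Ω`. -/
def CnBarSpace (n p : ℕ) (Ω : Set (Fin p → ℝ)) (E : Type*)
    [NormedAddCommGroup E] [NormedSpace ℝ E] : Set (Ω → E) :=
  {f | ∃ g : (Fin p → ℝ) → E, ContDiffOn ℝ n g Ω ∧ (∀ x : Ω, f x = g x) ∧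
    ∀ k : ℕ, k ≤ n →
      ∃ G : closure Ω → ContinuousMultilinearMap ℝ (fun _ : Fin k => (Fin p → ℝ)) E,
        Continuous G ∧
          ∀ x : Ω, G ⟨x.1, subset_closure x.2⟩ = iteratedFDerivWithin ℝ k g Ω x.1}

theorem CnBarSpace.add_mem {n p : ℕ} {Ω : Set (Fin p → ℝ)} (hΩ : IsOpen Ω) {E : Type*}
    [NormedAddCommGroup E] [NormedSpace ℝ E] {f g : Ω → E}
    (hf : f ∈ CnBarSpace n p Ω E) (hg : g ∈ CnBarSpace n p Ω E) :
    f + g ∈ CnBarSpace n p Ω E := by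
  obtain ⟨a, ha, hfa, hexta⟩ := hf
  obtain ⟨b, hb, hgb, hextb⟩ := hg
  refine ⟨a + b, ha.add hb, fun x => by simp [Pi.add_apply, hfa x, hgb x], fun k hk => ?_⟩
  obtain ⟨Ga, hGa, hGa'⟩ := hexta k hk
  obtain ⟨Gb, hGb, hGb'⟩ := hextb k hk
  refine ⟨fun z => Ga z + Gb z, hGa.add hGb, fun x => ?_⟩
  have hk' : (k : WithTop ℕ∞) ≤ (n : WithTop ℕ∞) := by exact_mod_cast hk
  rw [iteratedFDerivWithin_add_apply ((ha.of_le hk') x.1 x.2) ((hb.of_le hk') x.1 x.2)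
    hΩ.uniqueDiffOn x.2]
  exact congrArg₂ (· + ·) (hGa' x) (hGb' x)

open Set Function Topology Metric
open scoped ContDiff Manifold

section ExtendsToClosure

variable {X Y Z : Type*} [TopologicalSpace X] [TopologicalSpace Y] [TopologicalSpace Z]
  {s : Set X}

def ExtendsToClosure (f : s → Y) : Prop :=
  ∃ G : closure s → Y, Continuous G ∧ ∀ x : s, G (inclusion subset_closure x) = f x

theorem isDenseInducing_inclusion_closure (s : Set X) :
    IsDenseInducing (inclusion (subset_closure : s ⊆ closure s)) :=
  ⟨(IsEmbedding.inclusion subset_closure).isInducing, (denseRange_inclusion_iff _).2 subset_rfl⟩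

-- A junk limit unless `ExtendsToClosure f`.
noncomputable def closureExtension (f : s → Y) : closure s → Y :=
  (isDenseInducing_inclusion_closure s).extend f

theorem closureExtension_eq [T2Space Y] {f : s → Y} {G : closure s → Y} (hG : Continuous G)
    (hGf : ∀ x : s, G (inclusion subset_closure x) = f x) : closureExtension f = G :=
  (isDenseInducing_inclusion_closure s).extend_unique hGf hG

theorem closureExtension_domRestrict [T2Space Y] {g : X → Y} (hg : Continuous g) :
    closureExtension (s.domRestrict g) = (closure s).domRestrict g :=
  closureExtension_eq (hg.comp continuous_subtype_val) fun _ => rfl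

theorem Continuous.extendsToClosure_domRestrict {g : X → Y} (hg : Continuous g) :
    ExtendsToClosure (s.domRestrict g) :=
  ⟨(closure s).domRestrict g, hg.comp continuous_subtype_val, fun _ => rfl⟩

namespace ExtendsToClosure

variable {f : s → Y}

theorem comp (h : ExtendsToClosure f) {L : Y → Z} (hL : Continuous L) :
    ExtendsToClosure (L ∘ f) :=
  let ⟨G, hG, hGf⟩ := h
  ⟨L ∘ G, hL.comp hG, fun x => congrArg L (hGf x)⟩

theorem prodMk (hf : ExtendsToClosure f) {g : s → Z} (hg : ExtendsToClosure g) :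
    ExtendsToClosure fun x => (f x, g x) :=
  let ⟨F, hF, hFf⟩ := hf
  let ⟨G, hG, hGg⟩ := hg
  ⟨fun z => (F z, G z), hF.prodMk hG, fun x => Prod.ext (hFf x) (hGg x)⟩

variable [T2Space Y]

theorem continuous_closureExtension (h : ExtendsToClosure f) :
    Continuous (closureExtension f) := by
  obtain ⟨G, hG, hGf⟩ := h
  rwa [closureExtension_eq hG hGf]

theorem closureExtension_inclusion (h : ExtendsToClosure f) (x : s) :
    closureExtension f (inclusion subset_closure x) = f x := by
  obtain ⟨G, hG, hGf⟩ := h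
  rw [closureExtension_eq hG hGf, hGf]

theorem disjoint_support_closureExtension [Zero Y] (hf : ExtendsToClosure f) {g : s → Y}
    (hg : ExtendsToClosure g) (hfg : Disjoint (support f) (support g)) :
    Disjoint (support (closureExtension f)) (support (closureExtension g)) := by
  have key : ∀ z, closureExtension f z = 0 ∨ closureExtension g z = 0 :=
    isClosed_property (isDenseInducing_inclusion_closure s).dense
      ((isClosed_eq hf.continuous_closureExtension continuous_const).union
        (isClosed_eq hg.continuous_closureExtension continuous_const))
      fun x => by
        rw [hf.closureExtension_inclusion, hg.closureExtension_inclusion]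
        by_contra! hx
        exact Set.disjoint_left.1 hfg hx.1 hx.2
  exact Set.disjoint_left.2 fun z hfz hgz => (key z).elim hfz hgz

end ExtendsToClosure

theorem Homeomorph.extendsToClosure_comp_iff (e : Y ≃ₜ Z) {f : s → Y} :
    ExtendsToClosure (e ∘ f) ↔ ExtendsToClosure f :=
  ⟨fun h => by simpa [← Function.comp_assoc] using h.comp e.symm.continuous,
    fun h => h.comp e.continuous⟩

theorem closureExtension_add [AddZeroClass Y] [ContinuousAdd Y] [T2Space Y] {f g : s → Y}
    (hf : ExtendsToClosure f) (hg : ExtendsToClosure g) :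
    closureExtension (f + g) = closureExtension f + closureExtension g :=
  closureExtension_eq (hf.continuous_closureExtension.add hg.continuous_closureExtension)
    fun x => by simp [hf.closureExtension_inclusion, hg.closureExtension_inclusion]

theorem closureExtension_sum [AddCommMonoid Y] [ContinuousAdd Y] [T2Space Y] {ι : Type*}
    (t : Finset ι) {f : ι → s → Y} (hf : ∀ i ∈ t, ExtendsToClosure (f i)) :
    closureExtension (∑ i ∈ t, f i) = fun z => ∑ i ∈ t, closureExtension (f i) z :=
  closureExtension_eq (continuous_finsetSum _ fun i hi => (hf i hi).continuous_closureExtension)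
    fun x => by
      simp only [Finset.sum_apply]
      exact Finset.sum_congr rfl fun i hi => (hf i hi).closureExtension_inclusion x

end ExtendsToClosure

section ContDiffUpToBoundary

-- `V : Type` keeps `V →L[ℝ] G` in the universe of `G`, as the induction in `bilinear` requires.
variable {V : Type} [NormedAddCommGroup V] [NormedSpace ℝ V] {Ω : Set V}
  {G : Type*} [NormedAddCommGroup G] [NormedSpace ℝ G] {k : ℕ} {g : V → G}

def ContDiffUpToBoundary (k : ℕ) (g : V → G) (Ω : Set V) : Prop :=
  ContDiffOn ℝ k g Ω ∧ ∀ j ≤ k, ExtendsToClosure (Ω.domRestrict (iteratedFDerivWithin ℝ j g Ω))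

theorem extendsToClosure_iteratedFDerivWithin_zero_iff :
    ExtendsToClosure (Ω.domRestrict (iteratedFDerivWithin ℝ 0 g Ω)) ↔
      ExtendsToClosure (Ω.domRestrict g) := by
  rw [iteratedFDerivWithin_zero_eq_comp]
  exact (continuousMultilinearCurryFin0 ℝ V G).symm.toHomeomorph.extendsToClosure_comp_iff

theorem extendsToClosure_iteratedFDerivWithin_succ_iff (hΩ : UniqueDiffOn ℝ Ω) {j : ℕ} :
    ExtendsToClosure (Ω.domRestrict (iteratedFDerivWithin ℝ (j + 1) g Ω)) ↔
      ExtendsToClosure (Ω.domRestrict (iteratedFDerivWithin ℝ j (fderivWithin ℝ g Ω) Ω)) := by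
  have : Ω.domRestrict (iteratedFDerivWithin ℝ (j + 1) g Ω) =
      (continuousMultilinearCurryRightEquiv' ℝ j V G).symm ∘
        Ω.domRestrict (iteratedFDerivWithin ℝ j (fderivWithin ℝ g Ω) Ω) :=
    funext fun x => iteratedFDerivWithin_succ_eq_comp_right hΩ x.2
  rw [this]
  exact (continuousMultilinearCurryRightEquiv' ℝ j V G).symm.toHomeomorph.extendsToClosure_comp_iff

theorem contDiffUpToBoundary_zero_iff :
    ContDiffUpToBoundary 0 g Ω ↔ ContinuousOn g Ω ∧ ExtendsToClosure (Ω.domRestrict g) := by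
  simp [ContDiffUpToBoundary, extendsToClosure_iteratedFDerivWithin_zero_iff]

theorem contDiffUpToBoundary_succ_iff (hΩ : UniqueDiffOn ℝ Ω) :
    ContDiffUpToBoundary (k + 1) g Ω ↔ DifferentiableOn ℝ g Ω ∧
      ExtendsToClosure (Ω.domRestrict g) ∧ ContDiffUpToBoundary k (fderivWithin ℝ g Ω) Ω := by
  have hj : (∀ j ≤ k + 1, ExtendsToClosure (Ω.domRestrict (iteratedFDerivWithin ℝ j g Ω))) ↔
      ExtendsToClosure (Ω.domRestrict g) ∧
        ∀ j ≤ k, ExtendsToClosure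
          (Ω.domRestrict (iteratedFDerivWithin ℝ j (fderivWithin ℝ g Ω) Ω)) := by
    constructor
    · intro h
      exact ⟨extendsToClosure_iteratedFDerivWithin_zero_iff.1 (h 0 k.succ.zero_le), fun j hj =>
        (extendsToClosure_iteratedFDerivWithin_succ_iff hΩ).1 (h (j + 1) (by omega))⟩
    · rintro ⟨h₀, h⟩ (_ | j) hj
      · exact extendsToClosure_iteratedFDerivWithin_zero_iff.2 h₀
      · exact (extendsToClosure_iteratedFDerivWithin_succ_iff hΩ).2 (h j (by omega))
  rw [ContDiffUpToBoundary, ContDiffUpToBoundary, hj, Nat.cast_succ,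
    contDiffOn_succ_iff_fderivWithin hΩ]
  simp only [WithTop.natCast_ne_top, IsEmpty.forall_iff, true_and]
  tauto

namespace ContDiffUpToBoundary

theorem of_le {j : ℕ} (h : ContDiffUpToBoundary k g Ω) (hjk : j ≤ k) :
    ContDiffUpToBoundary j g Ω :=
  ⟨h.1.of_le (by exact_mod_cast hjk), fun i hi => h.2 i (hi.trans hjk)⟩

theorem extendsToClosure (h : ContDiffUpToBoundary k g Ω) : ExtendsToClosure (Ω.domRestrict g) :=
  extendsToClosure_iteratedFDerivWithin_zero_iff.1 (h.2 0 k.zero_le)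

theorem congr {g' : V → G} (h : ContDiffUpToBoundary k g Ω) (he : EqOn g' g Ω) :
    ContDiffUpToBoundary k g' Ω := by
  refine ⟨h.1.congr he, fun j hj => ?_⟩
  have : Ω.domRestrict (iteratedFDerivWithin ℝ j g' Ω) =
      Ω.domRestrict (iteratedFDerivWithin ℝ j g Ω) :=
    funext fun x => iteratedFDerivWithin_congr he x.2 j
  exact this ▸ h.2 j hj

theorem add (hΩ : UniqueDiffOn ℝ Ω) {g' : V → G} (h : ContDiffUpToBoundary k g Ω)
    (h' : ContDiffUpToBoundary k g' Ω) : ContDiffUpToBoundary k (g + g') Ω := by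
  refine ⟨h.1.add h'.1, fun j hj => ?_⟩
  have hj' : (j : WithTop ℕ∞) ≤ k := by exact_mod_cast hj
  have : Ω.domRestrict (iteratedFDerivWithin ℝ j (g + g') Ω) =
      (fun p => p.1 + p.2) ∘ fun x => (Ω.domRestrict (iteratedFDerivWithin ℝ j g Ω) x,
        Ω.domRestrict (iteratedFDerivWithin ℝ j g' Ω) x) :=
    funext fun x => iteratedFDerivWithin_add_apply ((h.1.of_le hj') x x.2)
      ((h'.1.of_le hj') x x.2) hΩ x.2
  exact this ▸ ((h.2 j hj).prodMk (h'.2 j hj)).comp continuous_add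

theorem bilinear (hΩ : UniqueDiffOn ℝ Ω) {G₁ G₂ G₃ : Type*}
    [NormedAddCommGroup G₁] [NormedSpace ℝ G₁] [NormedAddCommGroup G₂] [NormedSpace ℝ G₂]
    [NormedAddCommGroup G₃] [NormedSpace ℝ G₃] (B : G₁ →L[ℝ] G₂ →L[ℝ] G₃) {ψ : V → G₁}
    {g : V → G₂} (hψ : ContDiff ℝ k ψ) (hg : ContDiffUpToBoundary k g Ω) :
    ContDiffUpToBoundary k (fun x => B (ψ x) (g x)) Ω := by
  induction k generalizing G₁ G₂ G₃ ψ g with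
  | zero =>
    rw [contDiffUpToBoundary_zero_iff] at hg ⊢
    exact ⟨B.continuous₂.comp_continuousOn (hψ.continuous.continuousOn.prodMk hg.1),
      (hψ.continuous.extendsToClosure_domRestrict.prodMk hg.2).comp B.continuous₂⟩
  | succ k ih =>
    obtain ⟨hgd, hge, hg'⟩ := (contDiffUpToBoundary_succ_iff hΩ).1 hg
    have hψd : Differentiable ℝ ψ := hψ.differentiable (by simp)
    have hderiv : EqOn (fderivWithin ℝ (fun x => B (ψ x) (g x)) Ω)
        ((fun x => B.precompR V (ψ x) (fderivWithin ℝ g Ω x)) +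
          fun x => B.precompL V (fderiv ℝ ψ x) (g x)) Ω := fun x hx => by
      rw [B.fderivWithin_of_bilinear (hψd x).differentiableWithinAt (hgd x hx) (hΩ x hx),
        fderivWithin_eq_fderiv (hΩ x hx) (hψd x)]
      rfl
    refine (contDiffUpToBoundary_succ_iff hΩ).2
      ⟨(B.differentiable.comp_differentiableOn hψd.differentiableOn).clm_apply hgd,
        (hψ.continuous.extendsToClosure_domRestrict.prodMk hge).comp B.continuous₂,
        (((ih (B.precompR V) (hψ.of_le (by exact_mod_cast k.le_succ)) hg').add hΩ
          (ih (B.precompL V) (hψ.fderiv_right (by push_cast; rfl)) (hg.of_le k.le_succ))).congr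
          hderiv)⟩

theorem smul (hΩ : UniqueDiffOn ℝ Ω) {φ : V → ℝ} (hφ : ContDiff ℝ k φ)
    (hg : ContDiffUpToBoundary k g Ω) : ContDiffUpToBoundary k (fun x => φ x • g x) Ω :=
  hg.bilinear hΩ (ContinuousLinearMap.lsmul ℝ ℝ) hφ

end ContDiffUpToBoundary

theorem ContDiff.contDiffUpToBoundary (hΩ : UniqueDiffOn ℝ Ω) (hg : ContDiff ℝ k g) :
    ContDiffUpToBoundary k g Ω := by
  refine ⟨hg.contDiffOn, fun j hj => ?_⟩
  have hj' : (j : WithTop ℕ∞) ≤ k := by exact_mod_cast hj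
  have : Ω.domRestrict (iteratedFDerivWithin ℝ j g Ω) = Ω.domRestrict (iteratedFDeriv ℝ j g) :=
    funext fun x => iteratedFDerivWithin_eq_iteratedFDeriv hΩ (hg.of_le hj').contDiffAt x.2
  exact this ▸ (hg.continuous_iteratedFDeriv hj').extendsToClosure_domRestrict

end ContDiffUpToBoundary

namespace CnBarSpace

variable {n p : ℕ} {Ω : Set (Fin p → ℝ)} {E : Type*} [NormedAddCommGroup E] [NormedSpace ℝ E]
  {f : Ω → E}

theorem mem_iff : f ∈ CnBarSpace n p Ω E ↔
    ∃ g : (Fin p → ℝ) → E, ContDiffUpToBoundary n g Ω ∧ ∀ x : Ω, f x = g x :=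
  ⟨fun ⟨g, hg, hfg, hext⟩ => ⟨g, ⟨hg, hext⟩, hfg⟩,
    fun ⟨g, ⟨hg, hext⟩, hfg⟩ => ⟨g, hg, hfg, hext⟩⟩

theorem extendsToClosure (hf : f ∈ CnBarSpace n p Ω E) : ExtendsToClosure f := by
  obtain ⟨g, hg, hfg⟩ := mem_iff.1 hf
  exact (funext hfg : f = Ω.domRestrict g) ▸ hg.extendsToClosure

theorem const_mem (hΩ : IsOpen Ω) (v : E) : (fun _ : Ω => v) ∈ CnBarSpace n p Ω E :=
  mem_iff.2 ⟨fun _ => v, contDiff_const.contDiffUpToBoundary hΩ.uniqueDiffOn, fun _ => rfl⟩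

theorem smul_mem (hΩ : IsOpen Ω) {φ : (Fin p → ℝ) → ℝ} (hφ : ContDiff ℝ n φ)
    (hf : f ∈ CnBarSpace n p Ω E) : (fun x : Ω => φ x • f x) ∈ CnBarSpace n p Ω E := by
  obtain ⟨g, hg, hfg⟩ := mem_iff.1 hf
  exact mem_iff.2 ⟨_, hg.smul hΩ.uniqueDiffOn hφ, fun x => by rw [hfg]⟩

def addSubgroup (hΩ : IsOpen Ω) : AddSubgroup (Ω → E) where
  carrier := CnBarSpace n p Ω E
  add_mem' := add_mem hΩ
  zero_mem' := const_mem hΩ 0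
  neg_mem' {f} hf := by simpa [← Pi.neg_def] using smul_mem hΩ (contDiff_const (c := (-1 : ℝ))) hf

end CnBarSpace

section SupportMap

def IsSeparating {α β M N : Type*} [AddGroup M] [AddGroup N] {A : AddSubgroup (α → M)}
    {B : AddSubgroup (β → N)} (T : A → B) : Prop :=
  ∀ f g : A, Disjoint (support (f : α → M)) (support (g : α → M)) →
    Disjoint (support (T f : β → N)) (support (T g : β → N))

theorem disjoint_support_iff_forall_norm_mul_eq_zero {α M N : Type*} [NormedAddCommGroup M]
    [NormedAddCommGroup N] {f : α → M} {g : α → N} :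
    Disjoint (support f) (support g) ↔ ∀ x, ‖f x‖ * ‖g x‖ = 0 := by
  simp [Set.disjoint_left, or_iff_not_imp_left]

theorem closure_image_support_smul_subset {X R M : Type*} [TopologicalSpace X] [Zero R] [Zero M]
    [SMulWithZero R M] {s : Set X} (φ : X → R) (f : s → M) :
    closure (Subtype.val '' support fun x : s => φ x • f x) ⊆ tsupport φ :=
  closure_mono <| image_subset_iff.2 fun _ hx => support_smul_subset_left (fun x : s => φ x) f hx

variable {V : Type*} [NormedAddCommGroup V] {Ω : Set V} {E : Type*} [NormedAddCommGroup E]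
  {Y : Type*} [TopologicalSpace Y] {Ω' : Set Y} {F : Type*} [NormedAddCommGroup F]
  {A : AddSubgroup (Ω → E)} {B : AddSubgroup (Ω' → F)}

def IsSupportMap (T : A → B) (h : closure Ω' → closure Ω) : Prop :=
  ∀ y f, closureExtension (T f : Ω' → F) y ≠ 0 →
    (h y : V) ∈ closure (Subtype.val '' support (f : Ω → E))

theorem IsSupportMap.mem_closure_image_support (hB_ext : ∀ u ∈ B, ExtendsToClosure u)
    {T : A → B} {h : closure Ω' → closure Ω} (hh : IsSupportMap T h) (hc : Continuous h) {f : A}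
    {y : closure Ω'} (hy : (y : Y) ∈ closure (Subtype.val '' support (T f : Ω' → F))) :
    (h y : V) ∈ closure (Subtype.val '' support (f : Ω → E)) := by
  have hclosed : IsClosed {y | (h y : V) ∈ closure (Subtype.val '' support (f : Ω → E))} :=
    isClosed_closure.preimage (continuous_subtype_val.comp hc)
  refine (hclosed.closure_subset_iff (s := inclusion subset_closure '' support (T f : Ω' → F))).2
    ?_ (closure_subtype.2 ?_)
  · rintro _ ⟨x, hx, rfl⟩
    exact hh _ f (by rwa [(hB_ext _ (T f).2).closureExtension_inclusion])
  · rwa [← image_comp, val_comp_inclusion]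

variable [NormedSpace ℝ V] [FiniteDimensional ℝ V] [NormedSpace ℝ E]
  {𝓕 : Type*} [FunLike 𝓕 A B] [AddMonoidHomClass 𝓕 A B]

theorem IsSeparating.exists_mem_closure_support (hK : IsCompact (closure Ω))
    (hA_smul : ∀ φ : V → ℝ, ContDiff ℝ ∞ φ → ∀ f ∈ A, (fun x : Ω => φ x • f x) ∈ A)
    (hB_ext : ∀ u ∈ B, ExtendsToClosure u) {T : 𝓕} (hT : IsSeparating T) {y : closure Ω'}
    {f₀ : A} (hf₀ : closureExtension (T f₀ : Ω' → F) y ≠ 0) :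
    ∃ z : closure Ω, ∀ f : A, closureExtension (T f : Ω' → F) y ≠ 0 →
      (z : V) ∈ closure (Subtype.val '' support (f : Ω → E)) := by
  by_contra! H
  choose f hfy hfz using H
  set U : closure Ω → Set V := fun z => (closure (Subtype.val '' support (f z : Ω → E)))ᶜ
  have hU : ∀ z, IsOpen (U z) := fun z => isClosed_closure.isOpen_compl
  obtain ⟨t, ht⟩ := hK.elim_finite_subcover U hU fun x hx => mem_iUnion.2 ⟨⟨x, hx⟩, hfz _⟩
  obtain ⟨ρ, hρ⟩ := SmoothPartitionOfUnity.exists_isSubordinate 𝓘(ℝ, V) isClosed_closure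
    (fun i : t => U i) (fun i => hU i) (by simpa [iUnion_subtype] using ht)
  let w : t → A := fun i =>
    ⟨fun x => ρ i x • (f₀ : Ω → E) x, hA_smul _ (contMDiff_iff_contDiff.1 (ρ i).contMDiff) _ f₀.2⟩
  have hsum : f₀ = ∑ i, w i := by
    ext x
    simp only [AddSubgroup.val_finsetSum, Finset.sum_apply, w, ← Finset.sum_smul]
    rw [← finsum_eq_sum_of_fintype, ρ.sum_eq_one (subset_closure x.2), one_smul]
  have hzero : ∀ i, closureExtension (T (w i) : Ω' → F) y = 0 := fun i => by
    have hdisj : Disjoint (support (w i : Ω → E)) (support (f i : Ω → E)) :=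
      Set.disjoint_left.2 fun x hx hx' => (hρ i) (closure_image_support_smul_subset _ _
        (subset_closure ⟨x, hx, rfl⟩)) (subset_closure ⟨x, hx', rfl⟩)
    have hdisj' := (hB_ext _ (T (w i)).2).disjoint_support_closureExtension
      (hB_ext _ (T (f i)).2) (hT _ _ hdisj)
    exact notMem_support.1 (Set.disjoint_right.1 hdisj' (hfy i))
  apply hf₀
  rw [hsum, map_sum, AddSubgroup.val_finsetSum,
    closureExtension_sum _ fun i _ => hB_ext _ (T (w i)).2]
  exact Finset.sum_eq_zero fun i _ => hzero i

theorem IsSupportMap.continuous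
    (hA_smul : ∀ φ : V → ℝ, ContDiff ℝ ∞ φ → ∀ f ∈ A, (fun x : Ω => φ x • f x) ∈ A)
    (hB_ext : ∀ u ∈ B, ExtendsToClosure u) {T : 𝓕} {h : closure Ω' → closure Ω}
    (hh : IsSupportMap T h) {f₀ : A} (hf₀ : ∀ y, closureExtension (T f₀ : Ω' → F) y ≠ 0) :
    Continuous h := by
  refine Metric.continuous_iff'.2 fun y₀ ε hε => ?_
  let ψ : ContDiffBump (h y₀ : V) := ⟨ε / 4, ε / 2, by positivity, by linarith⟩
  let w₁ : A := ⟨fun x => ψ x • (f₀ : Ω → E) x, hA_smul _ ψ.contDiff _ f₀.2⟩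
  let w₂ : A := ⟨fun x => (1 - ψ x) • (f₀ : Ω → E) x,
    hA_smul _ (contDiff_const.sub ψ.contDiff) _ f₀.2⟩
  have hsplit : f₀ = w₁ + w₂ := by
    ext x
    simp [w₁, w₂, ← add_smul]
  have hw₂ : closureExtension (T w₂ : Ω' → F) y₀ = 0 := by
    by_contra hne
    refine notMem_tsupport_iff_eventuallyEq.2 ?_
      (closure_image_support_smul_subset (fun x => 1 - ψ x) _ (hh y₀ w₂ hne))
    filter_upwards [ψ.eventuallyEq_one] with x hx
    simp [hx]
  have hw₁ : closureExtension (T w₁ : Ω' → F) y₀ ≠ 0 := by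
    have := hf₀ y₀
    rwa [hsplit, map_add, AddSubgroup.coe_add, closureExtension_add (hB_ext _ (T w₁).2)
      (hB_ext _ (T w₂).2), Pi.add_apply, hw₂, add_zero] at this
  filter_upwards [(hB_ext _ (T w₁).2).continuous_closureExtension.continuousAt.eventually_ne hw₁]
    with y hy
  have : (h y : V) ∈ closedBall (h y₀ : V) (ε / 2) :=
    ψ.tsupport_eq ▸ closure_image_support_smul_subset _ _ (hh y w₁ hy)
  exact (mem_closedBall.1 this).trans_lt (by linarith)

theorem IsSeparating.exists_isSupportMap (hK : IsCompact (closure Ω))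
    (hA_smul : ∀ φ : V → ℝ, ContDiff ℝ ∞ φ → ∀ f ∈ A, (fun x : Ω => φ x • f x) ∈ A)
    (hB_ext : ∀ u ∈ B, ExtendsToClosure u) {T : 𝓕} (hT : IsSeparating T) {f₀ : A}
    (hf₀ : ∀ y, closureExtension (T f₀ : Ω' → F) y ≠ 0) :
    ∃ h : closure Ω' → closure Ω, Continuous h ∧ IsSupportMap T h := by
  choose h hh using fun y => hT.exists_mem_closure_support hK hA_smul hB_ext (hf₀ y)
  exact ⟨h, IsSupportMap.continuous hA_smul hB_ext hh hf₀, hh⟩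

end SupportMap

section Biseparating

variable {V V' : Type*} [NormedAddCommGroup V] [NormedSpace ℝ V] [FiniteDimensional ℝ V]
  [NormedAddCommGroup V'] {Ω : Set V} {Ω' : Set V'} {E F : Type*} [NormedAddCommGroup E]
  [NormedSpace ℝ E] [NormedAddCommGroup F] {A : AddSubgroup (Ω → E)} {B : AddSubgroup (Ω' → F)}

theorem IsSupportMap.leftInverse [Nontrivial E]
    (hA_const : ∀ v, (fun _ => v) ∈ A)
    (hA_smul : ∀ φ : V → ℝ, ContDiff ℝ ∞ φ → ∀ f ∈ A, (fun x : Ω => φ x • f x) ∈ A)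
    (hB_ext : ∀ u ∈ B, ExtendsToClosure u) {T : A ≃+ B} {h₁ : closure Ω' → closure Ω}
    {h₂ : closure Ω → closure Ω'} (hh₁ : IsSupportMap T h₁) (hc₁ : Continuous h₁)
    (hh₂ : IsSupportMap T.symm h₂) : LeftInverse h₁ h₂ := by
  intro x
  obtain ⟨v, hv⟩ := exists_ne (0 : E)
  refine eq_of_forall_dist_le fun ε hε => ?_
  let φ : ContDiffBump (x : V) := ⟨ε / 2, ε, by positivity, by linarith⟩
  let w : A := ⟨fun z => φ z • v, hA_smul _ φ.contDiff _ (hA_const v)⟩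
  have hwx : closureExtension (T.symm (T w) : Ω → E) x ≠ 0 := by
    rw [T.symm_apply_apply, show (w : Ω → E) = Ω.domRestrict (fun z => φ z • v) from rfl,
      closureExtension_domRestrict (g := fun z => φ z • v) (φ.continuous.smul continuous_const)]
    simpa [φ.one_of_mem_closedBall (mem_closedBall_self φ.rIn_pos.le)] using hv
  have := closure_image_support_smul_subset φ (fun _ : Ω => v)
    (hh₁.mem_closure_image_support hB_ext hc₁ (hh₂ x (T w) hwx))
  rw [φ.tsupport_eq] at this
  exact mem_closedBall.1 this

theorem IsSeparating.nonempty_homeomorph [NormedSpace ℝ V'] [FiniteDimensional ℝ V']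
    [NormedSpace ℝ F] [Nontrivial E] [Nontrivial F]
    (hK : IsCompact (closure Ω)) (hK' : IsCompact (closure Ω'))
    (hA_const : ∀ v, (fun _ => v) ∈ A) (hB_const : ∀ v, (fun _ => v) ∈ B)
    (hA_smul : ∀ φ : V → ℝ, ContDiff ℝ ∞ φ → ∀ f ∈ A, (fun x : Ω => φ x • f x) ∈ A)
    (hB_smul : ∀ φ : V' → ℝ, ContDiff ℝ ∞ φ → ∀ u ∈ B, (fun y : Ω' => φ y • u y) ∈ B)
    (hA_ext : ∀ f ∈ A, ExtendsToClosure f) (hB_ext : ∀ u ∈ B, ExtendsToClosure u)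
    (T : A ≃+ B) (hT : IsSeparating T) (hT' : IsSeparating T.symm) :
    Nonempty (closure Ω ≃ₜ closure Ω') := by
  obtain ⟨v, hv⟩ := exists_ne (0 : E)
  obtain ⟨v', hv'⟩ := exists_ne (0 : F)
  obtain ⟨h₁, hc₁, hh₁⟩ := hT.exists_isSupportMap hK hA_smul hB_ext
    (f₀ := T.symm ⟨_, hB_const v'⟩) fun y => by
      simpa [closureExtension_eq continuous_const fun _ => rfl] using hv'
  obtain ⟨h₂, hc₂, hh₂⟩ := hT'.exists_isSupportMap hK' hB_smul hA_ext
    (f₀ := T ⟨_, hA_const v⟩) fun x => by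
      simpa [closureExtension_eq continuous_const fun _ => rfl] using hv
  exact ⟨{ toFun := h₂, invFun := h₁
           left_inv := hh₁.leftInverse hA_const hA_smul hB_ext hc₁ hh₂
           right_inv := hh₂.leftInverse hB_const hB_smul hA_ext hc₂ hh₁ }⟩

end Biseparating

theorem stmt_18_general {n m p q : ℕ}
    {Ω : Set (Fin p → ℝ)} {Ω' : Set (Fin q → ℝ)}
    (hΩ : IsOpen Ω) (hΩbd : Bornology.IsBounded Ω)
    (hΩ' : IsOpen Ω') (hΩ'bd : Bornology.IsBounded Ω')
    {E F : Type*}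
    [NormedAddCommGroup E] [NormedSpace ℝ E] [Nontrivial E]
    [NormedAddCommGroup F] [NormedSpace ℝ F] [Nontrivial F]
    (T : CnBarSpace n p Ω E → CnBarSpace m q Ω' F)
    (hbij : Function.Bijective T)
    (hadd : ∀ f g : CnBarSpace n p Ω E,
      T ⟨f.1 + g.1, CnBarSpace.add_mem hΩ f.2 g.2⟩ =
        ⟨(T f).1 + (T g).1, CnBarSpace.add_mem hΩ' (T f).2 (T g).2⟩)
    (hsep : ∀ f g : CnBarSpace n p Ω E,
      (∀ x : Ω, ‖f.1 x‖ * ‖g.1 x‖ = 0) → ∀ y : Ω', ‖(T f).1 y‖ * ‖(T g).1 y‖ = 0)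
    (hsep' : ∀ f g : CnBarSpace n p Ω E,
      (∀ y : Ω', ‖(T f).1 y‖ * ‖(T g).1 y‖ = 0) → ∀ x : Ω, ‖f.1 x‖ * ‖g.1 x‖ = 0) :
    Nonempty (closure Ω ≃ₜ closure Ω') := by
  let A := CnBarSpace.addSubgroup (n := n) (E := E) hΩ
  let B := CnBarSpace.addSubgroup (n := m) (E := F) hΩ'
  let T' : A ≃+ B := AddEquiv.ofBijective (AddMonoidHom.mk' (M := A) (G := B) T hadd) hbij
  refine IsSeparating.nonempty_homeomorph hΩbd.isCompact_closure hΩ'bd.isCompact_closure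
    (CnBarSpace.const_mem hΩ) (CnBarSpace.const_mem hΩ')
    (fun _ hφ _ => CnBarSpace.smul_mem hΩ (hφ.of_le (by exact_mod_cast le_top)))
    (fun _ hφ _ => CnBarSpace.smul_mem hΩ' (hφ.of_le (by exact_mod_cast le_top)))
    (fun _ => CnBarSpace.extendsToClosure) (fun _ => CnBarSpace.extendsToClosure) T' ?_ ?_
  · intro f g hfg
    rw [disjoint_support_iff_forall_norm_mul_eq_zero] at hfg ⊢
    exact hsep f g hfg
  · intro u w huw
    rw [disjoint_support_iff_forall_norm_mul_eq_zero] at huw ⊢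
    refine hsep' (T'.symm u) (T'.symm w) ?_
    have hu : T (T'.symm u) = u := T'.apply_symm_apply u
    have hw : T (T'.symm w) = w := T'.apply_symm_apply w
    rwa [hu, hw]

/-- If `n, m ≥ 1`, `Ω ⊆ ℝ^p`, `Ω' ⊆ ℝ^q` are nonempty bounded open sets, `E`,
`F` nontrivial real Banach spaces, and there exists a biseparating map
`T : C^n(Ω̄,E) → C^m(Ω̄',F)`, then the closures of `Ω` and `Ω'` are homeomorphic. -/
theorem stmt_18 {n m p q : ℕ} (hn : 1 ≤ n) (hm : 1 ≤ m)
    {Ω : Set (Fin p → ℝ)} {Ω' : Set (Fin q → ℝ)}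
    (hΩ : IsOpen Ω) (hΩne : Ω.Nonempty) (hΩbd : Bornology.IsBounded Ω)
    (hΩ' : IsOpen Ω') (hΩ'ne : Ω'.Nonempty) (hΩ'bd : Bornology.IsBounded Ω')
    {E F : Type*}
    [NormedAddCommGroup E] [NormedSpace ℝ E] [Nontrivial E] [CompleteSpace E]
    [NormedAddCommGroup F] [NormedSpace ℝ F] [Nontrivial F] [CompleteSpace F]
    (T : CnBarSpace n p Ω E → CnBarSpace m q Ω' F)
    (hbij : Function.Bijective T)
    (hadd : ∀ f g : CnBarSpace n p Ω E,
      T ⟨f.1 + g.1, CnBarSpace.add_mem hΩ f.2 g.2⟩ =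
        ⟨(T f).1 + (T g).1, CnBarSpace.add_mem hΩ' (T f).2 (T g).2⟩)
    (hsep : ∀ f g : CnBarSpace n p Ω E,
      (∀ x : Ω, ‖f.1 x‖ * ‖g.1 x‖ = 0) → ∀ y : Ω', ‖(T f).1 y‖ * ‖(T g).1 y‖ = 0)
    (hsep' : ∀ f g : CnBarSpace n p Ω E,
      (∀ y : Ω', ‖(T f).1 y‖ * ‖(T g).1 y‖ = 0) → ∀ x : Ω, ‖f.1 x‖ * ‖g.1 x‖ = 0) :
    Nonempty (closure Ω ≃ₜ closure Ω') :=
  stmt_18_general hΩ hΩbd hΩ' hΩ'bd T hbij hadd hsep hsep'
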